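/- Let X = Xᵀ and Y = Yᵀ in ℝ^{n×n} satisfy ker R_X ⊆ ker S_X and ker R_Y ⊆ ker S_Y, and let Δ := X − Y. Then A_Yᵀ Δ (A_Y − A_X) = A_Yᵀ Δ B R_X† Bᵀ Δ A_Y. -/

import Mathlib

/-!
Put `W := A_Yᵀ Δ B` and `P := R_X†`. The kernel condition for `Y` gives `K_Yᵀ R_Y = S_Y`, and
with `R_X - R_Y = BᵀΔB`, `S_X - S_Y = AᵀΔB` this turns `W` into `S_X - K_Yᵀ R_X`. The kernel
condition for `X` then gives `W P R_X = W`. Since `A_Y - A_X = B (K_X - K_Y)`, the left-hand side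
is `W K_X - W K_Y = W P S_Xᵀ - W P R_X K_Y = W P Wᵀ`, and `Wᵀ = Bᵀ Δ A_Y` as `Δ` is symmetric.
-/

open Matrix

-- The Moore–Penrose pseudoinverse of a real matrix, characterised by the four
-- Penrose equations (it exists and is unique for every real matrix).
open Classical in
noncomputable def mpinv {α β : Type*} [Fintype α] [Fintype β]
    (M : Matrix α β ℝ) : Matrix β α ℝ :=
  if h : ∃ P : Matrix β α ℝ,
      M * P * M = M ∧ P * M * P = P ∧ (M * P)ᵀ = M * P ∧ (P * M)ᵀ = P * M
  then h.choose else 0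

/-- `R_X = R + BᵀXB`. -/
noncomputable def RX {ι κ : Type*} [Fintype ι] [Fintype κ]
    (R : Matrix κ κ ℝ) (B : Matrix ι κ ℝ) (X : Matrix ι ι ℝ) : Matrix κ κ ℝ :=
  R + Bᵀ * X * B

/-- `S_X = AᵀXB + S`. -/
noncomputable def SX {ι κ : Type*} [Fintype ι] [Fintype κ]
    (A : Matrix ι ι ℝ) (B S : Matrix ι κ ℝ) (X : Matrix ι ι ℝ) : Matrix ι κ ℝ :=
  Aᵀ * X * B + S

/-- `K_X = R_X† S_Xᵀ`. -/
noncomputable def KX {ι κ : Type*} [Fintype ι] [Fintype κ]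
    (A : Matrix ι ι ℝ) (B S : Matrix ι κ ℝ) (R : Matrix κ κ ℝ) (X : Matrix ι ι ℝ) :
    Matrix κ ι ℝ :=
  mpinv (RX R B X) * (SX A B S X)ᵀ

/-- The closed-loop matrix `A_X = A - B K_X`. -/
noncomputable def AX {ι κ : Type*} [Fintype ι] [Fintype κ]
    (A : Matrix ι ι ℝ) (B S : Matrix ι κ ℝ) (R : Matrix κ κ ℝ) (X : Matrix ι ι ℝ) :
    Matrix ι ι ℝ :=
  A - B * KX A B S R X

/-- The kernel condition `ker R_X ⊆ ker S_X`. -/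
def KerCond {ι κ : Type*} [Fintype ι] [Fintype κ]
    (A : Matrix ι ι ℝ) (B S : Matrix ι κ ℝ) (R : Matrix κ κ ℝ) (X : Matrix ι ι ℝ) : Prop :=
  ∀ v : κ → ℝ, (RX R B X).mulVec v = 0 → (SX A B S X).mulVec v = 0

/-- The Riccati operator `𝔇(X) = X - AᵀXA + S_X R_X† S_Xᵀ - Q`. -/
noncomputable def DOp {ι κ : Type*} [Fintype ι] [Fintype κ]
    (A Q : Matrix ι ι ℝ) (B S : Matrix ι κ ℝ) (R : Matrix κ κ ℝ) (X : Matrix ι ι ℝ) :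
    Matrix ι ι ℝ :=
  X - Aᵀ * X * A + SX A B S X * mpinv (RX R B X) * (SX A B S X)ᵀ - Q

/-- The Riccati map `ℛ(X) = AᵀXA - S_X R_X† S_Xᵀ + Q`. -/
noncomputable def Ricc {ι κ : Type*} [Fintype ι] [Fintype κ]
    (A Q : Matrix ι ι ℝ) (B S : Matrix ι κ ℝ) (R : Matrix κ κ ℝ) (X : Matrix ι ι ℝ) :
    Matrix ι ι ℝ :=
  Aᵀ * X * A - SX A B S X * mpinv (RX R B X) * (SX A B S X)ᵀ + Q

/-- `X` is a symmetric solution of CGDARE(Σ): it is symmetric, satisfies the GDARE and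
the kernel condition `ker R_X ⊆ ker S_X`. -/
def IsCGDARESolution {ι κ : Type*} [Fintype ι] [Fintype κ]
    (A Q : Matrix ι ι ℝ) (B S : Matrix ι κ ℝ) (R : Matrix κ κ ℝ) (X : Matrix ι ι ℝ) : Prop :=
  Xᵀ = X ∧ X = Ricc A Q B S R X ∧ KerCond A B S R X

/-- The matrix `N = [[A, 0, B], [Q, -I, S], [Sᵀ, 0, R]]` of the extended symplectic pencil. -/
noncomputable def Nmat {n m : ℕ} (A Q : Matrix (Fin n) (Fin n) ℝ)
    (B S : Matrix (Fin n) (Fin m) ℝ) (R : Matrix (Fin m) (Fin m) ℝ) :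
    Matrix (Fin n ⊕ (Fin n ⊕ Fin m)) (Fin n ⊕ (Fin n ⊕ Fin m)) ℝ :=
  fromBlocks A (fromCols 0 B) (fromRows Q Sᵀ) (fromBlocks (-1) S 0 R)

/-- The matrix `M = [[I, 0, 0], [0, -Aᵀ, 0], [0, -Bᵀ, 0]]` of the extended symplectic pencil. -/
noncomputable def Mmat {n m : ℕ} (A : Matrix (Fin n) (Fin n) ℝ)
    (B : Matrix (Fin n) (Fin m) ℝ) :
    Matrix (Fin n ⊕ (Fin n ⊕ Fin m)) (Fin n ⊕ (Fin n ⊕ Fin m)) ℝ :=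
  fromBlocks 1 0 0 (fromBlocks (-Aᵀ) 0 (-Bᵀ) 0)

def IsPenroseInverse {α β : Type*} [Fintype α] [Fintype β] (M : Matrix α β ℝ)
    (P : Matrix β α ℝ) : Prop :=
  M * P * M = M ∧ P * M * P = P ∧ (M * P)ᵀ = M * P ∧ (P * M)ᵀ = P * M

lemma isPenroseInverse_mpinv {α β : Type*} [Fintype α] [Fintype β] {M : Matrix α β ℝ}
    (h : ∃ P, IsPenroseInverse M P) : IsPenroseInverse M (mpinv M) := by
  unfold IsPenroseInverse at h
  rw [mpinv, dif_pos h]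
  exact h.choose_spec

section PenroseInverse

variable {κ : Type*} [Fintype κ] {R : Matrix κ κ ℝ}

/- Diagonalise `R = U D Uᵀ` orthogonally; `U D⁻¹ Uᵀ` works because `0⁻¹ = 0` in `ℝ`. -/
lemma exists_isPenroseInverse_of_transpose_eq (hR : Rᵀ = R) : ∃ P, IsPenroseInverse R P := by
  classical
  have hH : R.IsHermitian := by rwa [IsHermitian, conjTranspose_eq_transpose_of_trivial]
  set φ := Unitary.conjStarAlgAut ℝ (Matrix κ κ ℝ) hH.eigenvectorUnitary
  set d : κ → ℝ := hH.eigenvalues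
  have hspec : R = φ (diagonal d) := hH.spectral_theorem
  have hsymm (f : κ → ℝ) : (φ (diagonal f))ᵀ = φ (diagonal f) := by
    rw [← conjTranspose_eq_transpose_of_trivial, ← star_eq_conjTranspose, ← map_star,
      star_eq_conjTranspose, diagonal_conjTranspose, star_trivial]
  refine ⟨φ (diagonal d⁻¹), ?_, ?_, ?_, ?_⟩ <;>
    simp only [hspec, ← map_mul, diagonal_mul_diagonal, hsymm, Pi.inv_apply]
  · simp only [mul_inv_mul_cancel]
  · congr 2
    funext i
    simpa only [inv_inv, Pi.inv_apply] using mul_inv_mul_cancel (d i)⁻¹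

lemma isPenroseInverse_mpinv_of_transpose_eq (hR : Rᵀ = R) : IsPenroseInverse R (mpinv R) :=
  isPenroseInverse_mpinv (exists_isPenroseInverse_of_transpose_eq hR)

lemma mul_eq_zero_of_ker_le {ι μ : Type*} [Fintype μ] {S : Matrix ι κ ℝ}
    (hker : ∀ v, R *ᵥ v = 0 → S *ᵥ v = 0) {N : Matrix κ μ ℝ} (hN : R * N = 0) : S * N = 0 :=
  ext_iff_mulVec.2 fun v => by
    rw [← mulVec_mulVec, hker _ (by rw [mulVec_mulVec, hN, zero_mulVec]), zero_mulVec]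

lemma mul_mpinv_mul_of_ker_le {ι : Type*} (hR : Rᵀ = R) {S : Matrix ι κ ℝ}
    (hker : ∀ v, R *ᵥ v = 0 → S *ᵥ v = 0) : S * mpinv R * R = S := by
  classical
  have hRPR := (isPenroseInverse_mpinv_of_transpose_eq hR).1
  have h := mul_eq_zero_of_ker_le hker (N := 1 - mpinv R * R)
    (by rw [Matrix.mul_sub, Matrix.mul_one, ← Matrix.mul_assoc, hRPR, sub_self])
  rwa [Matrix.mul_sub, Matrix.mul_one, sub_eq_zero, eq_comm, ← Matrix.mul_assoc] at h

lemma mul_mul_mpinv_of_ker_le {ι : Type*} (hR : Rᵀ = R) {S : Matrix ι κ ℝ}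
    (hker : ∀ v, R *ᵥ v = 0 → S *ᵥ v = 0) : S * R * mpinv R = S := by
  classical
  obtain ⟨hRPR, -, hRP, -⟩ := isPenroseInverse_mpinv_of_transpose_eq hR
  have hN : R * (1 - R * mpinv R) = 0 := by
    rw [← hR, ← transpose_transpose (1 - _), ← transpose_mul, transpose_sub, transpose_one,
      hR, hRP, Matrix.sub_mul, Matrix.one_mul, hRPR, sub_self, transpose_zero]
  have h := mul_eq_zero_of_ker_le hker hN
  rwa [Matrix.mul_sub, Matrix.mul_one, sub_eq_zero, eq_comm, ← Matrix.mul_assoc] at h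

end PenroseInverse

section Riccati

variable {ι κ : Type*} [Fintype ι] [Fintype κ] {A : Matrix ι ι ℝ}
  {B S : Matrix ι κ ℝ} {R : Matrix κ κ ℝ} {X Y : Matrix ι ι ℝ}

lemma RX_transpose (hR : Rᵀ = R) (hX : Xᵀ = X) : (RX R B X)ᵀ = RX R B X := by
  simp only [RX, transpose_add, transpose_mul, transpose_transpose, hR, hX, Matrix.mul_assoc]

lemma RX_sub_RX : RX R B X - RX R B Y = Bᵀ * (X - Y) * B := by
  simp only [RX, Matrix.mul_sub, Matrix.sub_mul]
  abel

lemma SX_sub_SX : SX A B S X - SX A B S Y = Aᵀ * (X - Y) * B := by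
  simp only [SX, Matrix.mul_sub, Matrix.sub_mul]
  abel

lemma AX_sub_AX : AX A B S R Y - AX A B S R X = B * (KX A B S R X - KX A B S R Y) := by
  simp only [AX, Matrix.mul_sub]
  abel

lemma KX_transpose_mul_RX (hR : Rᵀ = R) (hX : Xᵀ = X) (hk : KerCond A B S R X) :
    (KX A B S R X)ᵀ * RX R B X = SX A B S X := by
  have hRX := RX_transpose (B := B) hR hX
  obtain ⟨-, -, hRP, -⟩ := isPenroseInverse_mpinv_of_transpose_eq hRX
  rw [KX, transpose_mul, transpose_transpose, Matrix.mul_assoc, ← hRX, ← transpose_mul, hRX, hRP,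
    ← Matrix.mul_assoc, mul_mul_mpinv_of_ker_le hRX hk]

lemma AX_transpose_mul_sub_mul (hR : Rᵀ = R) (hY : Yᵀ = Y) (hkY : KerCond A B S R Y) :
    (AX A B S R Y)ᵀ * (X - Y) * B = SX A B S X - (KX A B S R Y)ᵀ * RX R B X := by
  have hKR := KX_transpose_mul_RX hR hY hkY
  calc (AX A B S R Y)ᵀ * (X - Y) * B
      = Aᵀ * (X - Y) * B - (KX A B S R Y)ᵀ * (Bᵀ * (X - Y) * B) := by
        simp only [AX, transpose_sub, transpose_mul, Matrix.sub_mul, Matrix.mul_assoc]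
    _ = SX A B S X - (KX A B S R Y)ᵀ * RX R B X := by
        rw [← SX_sub_SX, ← RX_sub_RX, Matrix.mul_sub, hKR]
        abel

end Riccati

theorem stmt_8_general {n m : ℕ}
    (A Q : Matrix (Fin n) (Fin n) ℝ) (B S : Matrix (Fin n) (Fin m) ℝ)
    (R : Matrix (Fin m) (Fin m) ℝ)
    (hPi : (fromBlocks Q S Sᵀ R).PosSemidef)
    (X Y : Matrix (Fin n) (Fin n) ℝ) (hX : Xᵀ = X) (hY : Yᵀ = Y)
    (hkX : KerCond A B S R X) (hkY : KerCond A B S R Y) :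
    (AX A B S R Y)ᵀ * (X - Y) * (AX A B S R Y - AX A B S R X) =
      (AX A B S R Y)ᵀ * (X - Y) * B * mpinv (RX R B X) * Bᵀ * (X - Y) * AX A B S R Y := by
  have hR : Rᵀ = R := by
    rw [← conjTranspose_eq_transpose_of_trivial]
    exact (isHermitian_fromBlocks_iff.mp hPi.isHermitian).2.2.2
  have hRX := RX_transpose (B := B) hR hX
  set W := (AX A B S R Y)ᵀ * (X - Y) * B
  have hW : W = SX A B S X - (KX A B S R Y)ᵀ * RX R B X := AX_transpose_mul_sub_mul hR hY hkY
  have hWPR : W * mpinv (RX R B X) * RX R B X = W := by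
    rw [hW, Matrix.sub_mul, Matrix.sub_mul, mul_mpinv_mul_of_ker_le hRX hkX, Matrix.mul_assoc,
      Matrix.mul_assoc, ← Matrix.mul_assoc (RX R B X),
      (isPenroseInverse_mpinv_of_transpose_eq hRX).1]
  have hWt : Wᵀ = Bᵀ * (X - Y) * AX A B S R Y := by
    simp only [W, transpose_mul, transpose_transpose, transpose_sub, hX, hY, Matrix.mul_assoc]
  calc (AX A B S R Y)ᵀ * (X - Y) * (AX A B S R Y - AX A B S R X)
      = W * KX A B S R X - W * mpinv (RX R B X) * RX R B X * KX A B S R Y := by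
        rw [hWPR, AX_sub_AX, ← Matrix.mul_sub]
        simp only [W, Matrix.mul_assoc]
    _ = W * mpinv (RX R B X) * Wᵀ := by
        rw [hW, transpose_sub, transpose_mul, transpose_transpose, hRX, ← hW, KX]
        simp only [Matrix.mul_sub, Matrix.mul_assoc]
    _ = (AX A B S R Y)ᵀ * (X - Y) * B * mpinv (RX R B X) * Bᵀ * (X - Y) * AX A B S R Y := by
        rw [hWt]
        simp only [W, Matrix.mul_assoc]

/-- `A_Yᵀ Δ (A_Y - A_X) = A_Yᵀ Δ B R_X† Bᵀ Δ A_Y` with `Δ = X - Y`. -/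
theorem stmt_8 {n m : ℕ} (hn : 0 < n) (hm : 0 < m)
    (A Q : Matrix (Fin n) (Fin n) ℝ) (B S : Matrix (Fin n) (Fin m) ℝ)
    (R : Matrix (Fin m) (Fin m) ℝ)
    (hPi : (fromBlocks Q S Sᵀ R).PosSemidef)
    (X Y : Matrix (Fin n) (Fin n) ℝ) (hX : Xᵀ = X) (hY : Yᵀ = Y)
    (hkX : KerCond A B S R X) (hkY : KerCond A B S R Y) :
    (AX A B S R Y)ᵀ * (X - Y) * (AX A B S R Y - AX A B S R X) =
      (AX A B S R Y)ᵀ * (X - Y) * B * mpinv (RX R B X) * Bᵀ * (X - Y) * AX A B S R Y :=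
  stmt_8_general A Q B S R hPi X Y hX hY hkX hkY
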